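/- Let N, k, m be integers with k ≥ 1, m ≥ 2 and 2k ≤ N, and let λ be a partition with λ₁ ≤ m, at most k nonzero parts, and λ ≠ (m^k) (i.e. λ strictly contained in (m^k)). Let q₀, t₀ be nonzero complex numbers, neither of which is a root of unity, satisfying q₀^{m−1} t₀^{N−k+1} = 1 and, for every common divisor e > 1 of m−1 and N−k+1, q₀^{(m−1)/e} t₀^{(N−k+1)/e} ≠ 1. Then Π_{(i,j)∈λ} (1 − q₀^{λ_i − j} t₀^{λ'_j − i + 1}) · (1 − q₀^{λ_i − j + 1} t₀^{λ'_j − i}) ≠ 0. (This product is the denominator of Lassalle's explicit formula for the (q,t)-binomial coefficient (m^k choose λ), so that binomial coefficient has no pole at such parameter values.) -/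

import Mathlib

/-!
Each factor is `1 - q₀^a t₀^b` with `(a, b) ≠ (0, 0)` and `b ≤ k ≤ N - k < P`, where
`M = m - 1`, `P = N - k + 1`. If `q₀^a t₀^b = 1`, comparing with `q₀^M t₀^P = 1` and using
that `q₀` is not a root of unity gives `a P = M b`, so `(a, b) = c (M, P) / d` with `d = gcd M P`.
The minimality hypothesis says exactly that `x = q₀^(M/d) t₀^(P/d)` has order `d`; as
`x^c = q₀^a t₀^b = 1`, `d ∣ c`, which forces `b ≥ P` unless `c = 0`.
-/

open Finset

/-- The conjugate partition: `λ'_j = #{i : λ_i ≥ j}`. -/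
def conjPart {k : ℕ} (lam : Fin k → ℕ) (j : ℕ) : ℕ :=
  (univ.filter fun i : Fin k => j ≤ lam i).card

section Relations

variable {M₀ : Type*}

theorem pow_injective_of_forall_pow_ne_one [MonoidWithZero M₀] [IsLeftCancelMulZero M₀]
    {q : M₀} (hq0 : q ≠ 0) (hq : ∀ r : ℕ, 0 < r → q ^ r ≠ 1) :
    Function.Injective (q ^ · : ℕ → M₀) := by
  intro x y h
  by_contra hne
  wlog hxy : x < y generalizing x y
  · exact this h.symm (Ne.symm hne) (by omega)
  obtain ⟨r, rfl⟩ := Nat.exists_eq_add_of_lt hxy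
  refine hq (r + 1) r.succ_pos ((mul_eq_left₀ (pow_ne_zero x hq0)).mp ?_)
  rw [← pow_add, ← add_assoc]
  exact h.symm

theorem Nat.exists_eq_mul_div_gcd_of_mul_eq_mul {M P a b : ℕ} (hM : 0 < M)
    (h : a * P = M * b) : ∃ c, a = c * (M / M.gcd P) ∧ b = c * (P / M.gcd P) := by
  have hd : 0 < M.gcd P := Nat.gcd_pos_of_pos_left P hM
  have hM' : 0 < M / M.gcd P := Nat.div_pos (Nat.gcd_le_left P hM) hd
  have hred : a * (P / M.gcd P) = M / M.gcd P * b := by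
    rw [← Nat.mul_div_assoc _ (Nat.gcd_dvd_right M P), h,
      Nat.mul_div_right_comm (Nat.gcd_dvd_left M P)]
  obtain ⟨c, rfl⟩ : M / M.gcd P ∣ a :=
    (Nat.coprime_div_gcd_div_gcd hd).dvd_of_dvd_mul_right ⟨b, by rw [← hred]⟩
  refine ⟨c, mul_comm _ _, ?_⟩
  rw [mul_assoc] at hred
  exact (Nat.eq_of_mul_eq_mul_left hM' hred).symm

theorem orderOf_pow_div_gcd_mul_pow_div_gcd [CommMonoid M₀] {q t : M₀} {M P : ℕ} (hM : 0 < M)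
    (hrel : q ^ M * t ^ P = 1)
    (hmin : ∀ e : ℕ, 1 < e → e ∣ M → e ∣ P → q ^ (M / e) * t ^ (P / e) ≠ 1) :
    orderOf (q ^ (M / M.gcd P) * t ^ (P / M.gcd P)) = M.gcd P := by
  set d := M.gcd P
  set x := q ^ (M / d) * t ^ (P / d)
  have hx : x ^ d = 1 := by
    rw [mul_pow, ← pow_mul, ← pow_mul, Nat.div_mul_cancel (Nat.gcd_dvd_left M P),
      Nat.div_mul_cancel (Nat.gcd_dvd_right M P), hrel]
  have hd : 0 < d := Nat.gcd_pos_of_pos_left P hM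
  obtain ⟨e, he⟩ := orderOf_dvd_of_pow_eq_one hx
  have he0 : 0 < e := Nat.pos_of_ne_zero (by rintro rfl; omega)
  by_contra hne
  have he1 : 1 < e := by
    by_contra! he1
    obtain rfl : e = 1 := by omega
    exact hne (by rw [he, mul_one])
  have hdiv : ∀ {n : ℕ}, d ∣ n → e ∣ n ∧ n / e = n / d * orderOf x := fun {n} hn =>
    ⟨(Dvd.intro_left _ he.symm).trans hn,
      Nat.div_eq_of_eq_mul_left he0 (by rw [mul_assoc, ← he, Nat.div_mul_cancel hn])⟩
  obtain ⟨heM, hMe⟩ := hdiv (Nat.gcd_dvd_left M P)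
  obtain ⟨heP, hPe⟩ := hdiv (Nat.gcd_dvd_right M P)
  refine hmin e he1 heM heP ?_
  rw [hMe, hPe, pow_mul, pow_mul, ← mul_pow, pow_orderOf_eq_one]

theorem pow_mul_pow_eq_one_iff_of_lt [CommMonoidWithZero M₀] [IsCancelMulZero M₀]
    {q t : M₀} {M P a b : ℕ}
    (hq0 : q ≠ 0) (ht0 : t ≠ 0) (hq : ∀ r : ℕ, 0 < r → q ^ r ≠ 1) (hM : 0 < M)
    (hrel : q ^ M * t ^ P = 1)
    (hmin : ∀ e : ℕ, 1 < e → e ∣ M → e ∣ P → q ^ (M / e) * t ^ (P / e) ≠ 1)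
    (hb : b < P) : q ^ a * t ^ b = 1 ↔ a = 0 ∧ b = 0 := by
  refine ⟨fun hab => ?_, by rintro ⟨rfl, rfl⟩; simp⟩
  have hprop : a * P = M * b := by
    refine pow_injective_of_forall_pow_ne_one hq0 hq
      (mul_right_cancel₀ (pow_ne_zero (b * P) ht0) ?_)
    calc q ^ (a * P) * t ^ (b * P) = (q ^ a * t ^ b) ^ P := by
          rw [mul_pow, ← pow_mul, ← pow_mul]
      _ = (q ^ M * t ^ P) ^ b := by rw [hab, hrel, one_pow, one_pow]
      _ = q ^ (M * b) * t ^ (b * P) := by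
          rw [mul_pow, ← pow_mul, ← pow_mul, mul_comm P b]
  obtain ⟨c, rfl, rfl⟩ := Nat.exists_eq_mul_div_gcd_of_mul_eq_mul hM hprop
  have hc : M.gcd P ∣ c := by
    rw [← orderOf_pow_div_gcd_mul_pow_div_gcd hM hrel hmin]
    refine orderOf_dvd_of_pow_eq_one ?_
    rwa [mul_pow, ← pow_mul, ← pow_mul, mul_comm (M / _), mul_comm (P / _)]
  obtain rfl : c = 0 := by
    by_contra hc0
    have : M.gcd P * (P / M.gcd P) ≤ c * (P / M.gcd P) :=
      Nat.mul_le_mul_right _ (Nat.le_of_dvd (Nat.pos_of_ne_zero hc0) hc)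
    rw [Nat.mul_div_cancel' (Nat.gcd_dvd_right M P)] at this
    omega
  simp

end Relations

theorem conjPart_le_card {k : ℕ} (lam : Fin k → ℕ) (j : ℕ) : conjPart lam j ≤ k :=
  (card_filter_le _ _).trans_eq (card_fin k)

theorem lt_conjPart {k : ℕ} {lam : Fin k → ℕ} (hanti : Antitone lam) {i : Fin k} {j : ℕ}
    (hj : j ≤ lam i) : (i : ℕ) < conjPart lam j := by
  have hsub : Iic i ⊆ univ.filter fun i' : Fin k => j ≤ lam i' := fun i' hi' =>
    mem_filter.mpr ⟨mem_univ _, hj.trans (hanti (mem_Iic.mp hi'))⟩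
  exact Nat.lt_of_succ_le ((Fin.card_Iic i).symm.trans_le (card_le_card hsub))

theorem lassalle_binomial_denominator_nonzero_general
    (N k m : ℕ) (hm : 2 ≤ m) (hkN : 2 * k ≤ N)
    (lam : Fin k → ℕ) (hanti : Antitone lam)
    (q₀ t₀ : ℂ) (hq₀ : q₀ ≠ 0) (ht₀ : t₀ ≠ 0)
    (hqru : ∀ r : ℕ, 0 < r → q₀ ^ r ≠ 1)
    (hrel : q₀ ^ (m - 1) * t₀ ^ (N - k + 1) = 1)
    (hmin : ∀ e : ℕ, 1 < e → e ∣ (m - 1) → e ∣ (N - k + 1) →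
      q₀ ^ ((m - 1) / e) * t₀ ^ ((N - k + 1) / e) ≠ 1) :
    ∏ i : Fin k, ∏ j ∈ Icc 1 (lam i),
      ((1 - q₀ ^ (lam i - j) * t₀ ^ (conjPart lam j - (i : ℕ))) *
        (1 - q₀ ^ (lam i - j + 1) * t₀ ^ (conjPart lam j - ((i : ℕ) + 1)))) ≠ 0 := by
  have key : ∀ {a b : ℕ}, b < N - k + 1 → q₀ ^ a * t₀ ^ b = 1 → a = 0 ∧ b = 0 :=
    fun hb => (pow_mul_pow_eq_one_iff_of_lt hq₀ ht₀ hqru (by omega) hrel hmin hb).mp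
  refine prod_ne_zero_iff.mpr fun i _ => prod_ne_zero_iff.mpr fun j hj => ?_
  have hi := lt_conjPart hanti (mem_Icc.mp hj).2
  have hk := conjPart_le_card lam j
  refine mul_ne_zero (sub_ne_zero.mpr fun h => ?_) (sub_ne_zero.mpr fun h => ?_)
  · have := key (by omega) h.symm
    omega
  · have := key (by omega) h.symm
    omega

/-- Let `k ≥ 1`, `m ≥ 2`, `2k ≤ N`, and let `λ ⊊ (m^k)` be a partition
strictly contained in the `k × m` rectangle.  If `q₀, t₀` are nonzero complex numbers,
neither a root of unity, with `q₀^{m−1} t₀^{N−k+1} = 1` and no lower-order such relation,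
then `Π_{(i,j)∈λ} (1 − q₀^{λ_i−j} t₀^{λ'_j−i+1})·(1 − q₀^{λ_i−j+1} t₀^{λ'_j−i}) ≠ 0`,
i.e. the denominator of Lassalle's formula for the (q,t)-binomial `(m^k choose λ)`
does not vanish at `(q₀,t₀)`. -/
theorem lassalle_binomial_denominator_nonzero
    (N k m : ℕ) (hk : 1 ≤ k) (hm : 2 ≤ m) (hkN : 2 * k ≤ N)
    (lam : Fin k → ℕ) (hanti : Antitone lam) (hsub : ∀ i, lam i ≤ m)
    (hne : lam ≠ fun _ => m)
    (q₀ t₀ : ℂ) (hq₀ : q₀ ≠ 0) (ht₀ : t₀ ≠ 0)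
    (hqru : ∀ r : ℕ, 0 < r → q₀ ^ r ≠ 1) (htru : ∀ r : ℕ, 0 < r → t₀ ^ r ≠ 1)
    (hrel : q₀ ^ (m - 1) * t₀ ^ (N - k + 1) = 1)
    (hmin : ∀ e : ℕ, 1 < e → e ∣ (m - 1) → e ∣ (N - k + 1) →
      q₀ ^ ((m - 1) / e) * t₀ ^ ((N - k + 1) / e) ≠ 1) :
    ∏ i : Fin k, ∏ j ∈ Icc 1 (lam i),
      ((1 - q₀ ^ (lam i - j) * t₀ ^ (conjPart lam j - (i : ℕ))) *
        (1 - q₀ ^ (lam i - j + 1) * t₀ ^ (conjPart lam j - ((i : ℕ) + 1)))) ≠ 0 :=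
  lassalle_binomial_denominator_nonzero_general N k m hm hkN lam hanti q₀ t₀ hq₀ ht₀ hqru hrel hmin
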